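/- Let G be a graph satisfying proj dim S/I(G) = bight(I(G)) (e.g., G sequentially Cohen–Macaulay), and let G' be any splitting graph of G. Then proj dim I(G) ≤ proj dim I(G'). -/

import Mathlib

open MvPolynomial CategoryTheory

/-- `α : V' → V` is a splitting map from the graph `G'` to the graph `G`. -/
def IsSplittingMap {V' V : Type*} (G' : SimpleGraph V') (G : SimpleGraph V) (α : V' → V) : Prop :=
  Function.Surjective α ∧
  (∀ v w, G'.Adj v w → G.Adj (α v) (α w)) ∧
  Set.BijOn (Sym2.map α) G'.edgeSet G.edgeSet

/-- The projective dimension of an `R`-module `M`. -/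
noncomputable def projDim (R : Type) [Ring R] (M : Type) [AddCommGroup M] [Module R M] : ℕ∞ :=
  sInf {n : ℕ∞ | ∃ m : ℕ, n = m ∧
    ∃ P : ProjectiveResolution (ModuleCat.of R M), ∀ i : ℕ, m < i → Limits.IsZero (P.complex.X i)}

/-- The edge ideal of a graph `G`. -/
noncomputable def edgeIdeal (K : Type) [Field K] {V : Type} (G : SimpleGraph V) :
    Ideal (MvPolynomial V K) :=
  Ideal.span {m | ∃ i j, G.Adj i j ∧ m = X i * X j}

/-- A vertex cover of `H` is a set of vertices meeting every edge of `H`. -/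
def IsVertexCover {V : Type*} (H : SimpleGraph V) (C : Set V) : Prop :=
  ∀ e ∈ H.edgeSet, ∃ v ∈ C, v ∈ e

/-- A minimal vertex cover. -/
def IsMinimalVertexCover {V : Type*} (H : SimpleGraph V) (C : Finset V) : Prop :=
  IsVertexCover H ↑C ∧ ∀ D : Finset V, D ⊂ C → ¬ IsVertexCover H ↑D

/-- `bight I(H)`: the maximum cardinality of a minimal vertex cover of `H`. -/
noncomputable def bight {V : Type*} (H : SimpleGraph V) : ℕ :=
  sSup {n : ℕ | ∃ C : Finset V, IsMinimalVertexCover H C ∧ C.card = n}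

/-
A maximum minimal vertex cover `C` of `G` pulls back along the splitting map to a vertex cover
of `G'`; any minimal vertex cover `E` of `G'` inside it maps onto a vertex cover of `G` contained
in `C`, hence onto `C` itself. So `bight G = #C ≤ #E ≤ bight G'`, and the two assumed facts
together with `proj dim S/I(G) = bight I(G)` turn this into the inequality of projective
dimensions.
-/

section VertexCover

variable {V V' : Type*}

theorem IsVertexCover.exists_isMinimalVertexCover_subset {H : SimpleGraph V} {D : Finset V}
    (hD : IsVertexCover H ↑D) : ∃ C ⊆ D, IsMinimalVertexCover H C := by
  obtain ⟨C, hCD, hCmin⟩ := exists_minimal_le_of_wellFoundedLT (fun C : Finset V ↦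
    IsVertexCover H ↑C) D hD
  exact ⟨C, hCD, hCmin.prop, fun E hEC hE ↦ hCmin.not_prop_of_lt hEC hE⟩

theorem IsMinimalVertexCover.eq_of_subset {H : SimpleGraph V} {C D : Finset V}
    (hC : IsMinimalVertexCover H C) (hD : IsVertexCover H ↑D) (hDC : D ⊆ C) : D = C := by
  by_contra hne
  exact hC.2 D (hDC.ssubset_of_ne hne) hD

theorem IsVertexCover.preimage {G : SimpleGraph V} {G' : SimpleGraph V'} {α : V' → V}
    (hα : Set.MapsTo (Sym2.map α) G'.edgeSet G.edgeSet) {C : Set V} (hC : IsVertexCover G C) :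
    IsVertexCover G' (α ⁻¹' C) := by
  intro e he
  obtain ⟨w, hwC, hwe⟩ := hC _ (hα he)
  obtain ⟨v, hve, rfl⟩ := Sym2.mem_map.mp hwe
  exact ⟨v, hwC, hve⟩

theorem IsVertexCover.image {G : SimpleGraph V} {G' : SimpleGraph V'} {α : V' → V}
    (hα : Set.SurjOn (Sym2.map α) G'.edgeSet G.edgeSet) {C : Set V'} (hC : IsVertexCover G' C) :
    IsVertexCover G (α '' C) := by
  intro e he
  obtain ⟨e', he', rfl⟩ := hα he
  obtain ⟨v, hvC, hve⟩ := hC _ he'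
  exact ⟨α v, Set.mem_image_of_mem α hvC, Sym2.mem_map.mpr ⟨v, hve, rfl⟩⟩

variable [Fintype V] [Fintype V']

theorem bddAbove_card_isMinimalVertexCover (H : SimpleGraph V) :
    BddAbove {n : ℕ | ∃ C : Finset V, IsMinimalVertexCover H C ∧ C.card = n} := by
  refine ⟨Fintype.card V, ?_⟩
  rintro _ ⟨D, -, rfl⟩
  exact D.card_le_univ

theorem IsMinimalVertexCover.card_le_bight {H : SimpleGraph V} {C : Finset V}
    (hC : IsMinimalVertexCover H C) : C.card ≤ bight H :=
  le_csSup (bddAbove_card_isMinimalVertexCover H) ⟨C, hC, rfl⟩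

theorem exists_isMinimalVertexCover_card_eq_bight (H : SimpleGraph V) :
    ∃ C, IsMinimalVertexCover H C ∧ C.card = bight H := by
  have huniv : IsVertexCover H ↑(Finset.univ : Finset V) := fun e _ ↦
    ⟨e.out.1, Finset.mem_coe.mpr (Finset.mem_univ _), Sym2.out_fst_mem e⟩
  obtain ⟨C, -, hC⟩ := huniv.exists_isMinimalVertexCover_subset
  exact Nat.sSup_mem (s := {n | ∃ C, IsMinimalVertexCover H C ∧ C.card = n})
    ⟨C.card, C, hC, rfl⟩ (bddAbove_card_isMinimalVertexCover H)

theorem IsSplittingMap.bight_le {G : SimpleGraph V} {G' : SimpleGraph V'} {α : V' → V}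
    (h : IsSplittingMap G' G α) : bight G ≤ bight G' := by
  classical
  obtain ⟨-, -, hbij⟩ := h
  obtain ⟨C, hC, hCcard⟩ := exists_isMinimalVertexCover_card_eq_bight G
  have hpre : IsVertexCover G' ↑(Finset.univ.filter (α · ∈ C)) := by
    simpa [Set.preimage] using hC.1.preimage hbij.mapsTo
  obtain ⟨E, hEpre, hE⟩ := hpre.exists_isMinimalVertexCover_subset
  have himage_sub : E.image α ⊆ C := by
    intro w hw
    obtain ⟨v, hv, rfl⟩ := Finset.mem_image.mp hw
    simpa using hEpre hv
  have himage_cover : IsVertexCover G ↑(E.image α) := by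
    simpa using hE.1.image hbij.surjOn
  calc bight G = C.card := hCcard.symm
    _ = (E.image α).card := by rw [hC.eq_of_subset himage_cover himage_sub]
    _ ≤ E.card := Finset.card_image_le
    _ ≤ bight G' := hE.card_le_bight

end VertexCover

/-- Let `G` be a graph with `proj dim S/I(G) = bight I(G)` (e.g. `G` sequentially
Cohen–Macaulay) and let `G'` be any splitting graph of `G`. Then
`proj dim I(G) ≤ proj dim I(G')`. Here we assume the known facts that
`bight I(H) − 1 ≤ proj dim I(H)` and `proj dim I(H) = proj dim S/I(H) − 1`
for every graph `H`. -/
theorem projDim_le_of_splitting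
    (K : Type) [Field K] {n n' : ℕ}
    (G : SimpleGraph (Fin n)) (G' : SimpleGraph (Fin n')) (α : Fin n' → Fin n)
    (h : IsSplittingMap G' G α)
    (hfact1 : ∀ (m : ℕ) (H : SimpleGraph (Fin m)),
      (bight H : ℕ∞) - 1 ≤ projDim (MvPolynomial (Fin m) K) ↥(edgeIdeal K H))
    (hfact2 : ∀ (m : ℕ) (H : SimpleGraph (Fin m)),
      projDim (MvPolynomial (Fin m) K) ↥(edgeIdeal K H) =
        projDim (MvPolynomial (Fin m) K) (MvPolynomial (Fin m) K ⧸ edgeIdeal K H) - 1)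
    (hG : projDim (MvPolynomial (Fin n) K) (MvPolynomial (Fin n) K ⧸ edgeIdeal K G) =
      (bight G : ℕ∞)) :
    projDim (MvPolynomial (Fin n) K) ↥(edgeIdeal K G) ≤
      projDim (MvPolynomial (Fin n') K) ↥(edgeIdeal K G') :=
  calc projDim (MvPolynomial (Fin n) K) ↥(edgeIdeal K G)
      = (bight G : ℕ∞) - 1 := by rw [hfact2 n G, hG]
    _ ≤ (bight G' : ℕ∞) - 1 := tsub_le_tsub_right (mod_cast h.bight_le) 1
    _ ≤ projDim (MvPolynomial (Fin n') K) ↥(edgeIdeal K G') := hfact1 n' G'
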